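/- Let φ = ⋀_{j=1}^M (l_{j,1} ∨ l_{j,2} ∨ l_{j,3}) be a propositional formula in 3-conjunctive normal form over variables x₁,…,x_N, where each literal l_{j,h} belongs to {x₁,…,x_N, x̄₁,…,x̄_N}; write κ(j,h) for the index i with l_{j,h} ∈ {xᵢ, x̄ᵢ}, and set a_{j,h} = 2 if l_{j,h} is a positive literal and a_{j,h} = −2 otherwise. Let M_φ be the MDP with states S = {s, t} and actions Act = {α, β}, where P(s,α,s) = P(s,β,t) = P(t,β,t) = 1 and all other transition probabilities are 0. Then φ is satisfiable if and only if there exist schedulers σ₁,…,σ_N for M_φ such that |Pr^{M_φ,σᵢ}_s(◇{t}) − 1/2| > 1/4 for all 1 ≤ i ≤ N, and Σ_{h=1}^3 a_{j,h} · (Pr^{M_φ,σ_{κ(j,h)}}_s(◇{t}) − 1/2) ≥ −1 for all 1 ≤ j ≤ M. -/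

import Mathlib

open scoped Classical
open Filter

noncomputable section

/-- A Markov decision process with state space `S` and action space `A`. -/
structure MDP (S A : Type) where
  P : S → A → S → ℝ
  nonneg : ∀ s a s', 0 ≤ P s a s'
  le_one : ∀ s a s', P s a s' ≤ 1
  exists_enabled : ∀ s : S, ∃ a : A, (∑' s', P s a s') = 1
  zero_of_not_enabled : ∀ (s : S) (a : A), (∑' s', P s a s') ≠ 1 → (∑' s', P s a s') = 0

namespace MDP

variable {S A : Type}

/-- Action `a` is enabled in state `s`. -/
def Enabled (M : MDP S A) (s : S) (a : A) : Prop := (∑' s', M.P s a s') = 1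

/-- `s` is an absorbing state. -/
def AbsorbingState (M : MDP S A) (s : S) : Prop := ∀ a : A, M.Enabled s a → M.P s a s = 1

/-- An absorbing set of states: all its elements are absorbing. -/
def AbsorbingSet (M : MDP S A) (T : Set S) : Prop := ∀ s ∈ T, M.AbsorbingState s

end MDP

/-- A finite path: an initial state together with a list of (action, next state) steps. -/
abbrev FPath (S A : Type) : Type := S × List (A × S)

/-- The last state of a finite path. -/
def fpLast {S A : Type} (p : FPath S A) : S := ((p.2.map Prod.snd).getLast?).getD p.1

/-- Extending a finite path by one step. -/
def fpExt {S A : Type} (p : FPath S A) (a : A) (s' : S) : FPath S A := (p.1, p.2 ++ [(a, s')])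

/-- A (history-dependent, randomized) scheduler for the MDP `M`. -/
structure Scheduler {S A : Type} (M : MDP S A) where
  act : FPath S A → A → ℝ
  nonneg : ∀ p a, 0 ≤ act p a
  sum_one : ∀ p, (∑' a, act p a) = 1
  not_enabled : ∀ p a, ¬ M.Enabled (fpLast p) a → act p a = 0

namespace Scheduler

variable {S A : Type} {M : MDP S A}

/-- A memoryless scheduler depends only on the last state of the path. -/
def Memoryless (σ : Scheduler M) : Prop :=
  ∀ p : FPath S A, σ.act p = σ.act (fpLast p, ([] : List (A × S)))

/-- A deterministic scheduler chooses a Dirac distribution on every path. -/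
def Deterministic (σ : Scheduler M) : Prop := ∀ p : FPath S A, ∃ a : A, σ.act p a = 1

/-- A memoryless deterministic (MD) scheduler. -/
def MD (σ : Scheduler M) : Prop := σ.Memoryless ∧ σ.Deterministic

end Scheduler

/-- One-step expectation operator: expected value of `g` after one step from `p`. -/
def stepExp {S A : Type} (M : MDP S A) (σ : Scheduler M) (p : FPath S A)
    (g : FPath S A → ℝ) : ℝ :=
  ∑' a : A, ∑' s' : S, σ.act p a * M.P (fpLast p) a s' * g (fpExt p a s')

/-- Probability of visiting `T` within `n` further steps, continuing the finite path `p`. -/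
def reachN {S A : Type} (M : MDP S A) (σ : Scheduler M) (T : Set S) :
    ℕ → FPath S A → ℝ
  | 0, p => if fpLast p ∈ T then 1 else 0
  | n + 1, p => if fpLast p ∈ T then 1 else stepExp M σ p (reachN M σ T n)

/-- Reachability probability `Pr^{M,σ}_s(◇T)`. -/
def reachProb {S A : Type} (M : MDP S A) (σ : Scheduler M) (s : S) (T : Set S) : ℝ :=
  ⨆ n : ℕ, reachN M σ T n (s, [])

/-- Probability of visiting `T` at some time `≥ j` within `j + n` steps, from path `p`. -/
def reachAfterN {S A : Type} (M : MDP S A) (σ : Scheduler M) (T : Set S) :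
    ℕ → ℕ → FPath S A → ℝ
  | 0, n, p => reachN M σ T n p
  | j + 1, n, p => stepExp M σ p (fun p' => reachAfterN M σ T j n p')

/-- Büchi probability `Pr^{M,σ}_s(□◇T)`: the probability of visiting `T` infinitely often. -/
def buchiProb {S A : Type} (M : MDP S A) (σ : Scheduler M) (s : S) (T : Set S) : ℝ :=
  ⨅ j : ℕ, ⨆ n : ℕ, reachAfterN M σ T j n (s, [])

/-- Expected sum of the rewards of the first `n+1` states (counting the current one). -/
def expRewN {S A : Type} (M : MDP S A) (σ : Scheduler M) (R : S → ℝ) :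
    ℕ → FPath S A → ℝ
  | 0, p => R (fpLast p)
  | n + 1, p => R (fpLast p) + stepExp M σ p (fun p' => expRewN M σ R n p')

/-- Expected total reward `E^{M,σ}_s(R)`. -/
def expTotalReward {S A : Type} (M : MDP S A) (σ : Scheduler M) (R : S → ℝ) (s : S) : ℝ :=
  limUnder atTop (fun n => expRewN M σ R n (s, []))

end

/-- States of the 3SAT-reduction MDP: `s`, `t`. -/
inductive St19 : Type where
  | s : St19
  | t : St19
deriving DecidableEq

/-- Actions of the 3SAT-reduction MDP: `α`, `β`. -/
inductive Ac19 : Type where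
  | α : Ac19
  | β : Ac19
deriving DecidableEq

/-!
Under a scheduler that plays `β` in `s` the target `t` is reached with probability `1`, and
under one that loops with `α` in `s` it is never reached; assigning these to the true and the
false variables respectively turns a satisfying assignment into schedulers for which every
literal contributes `±1` to its clause sum, with `+1` for a true literal. Conversely the gap
condition `|Pr(◇t) - 1/2| > 1/4` lets one read off the assignment `xᵢ ↦ (Pr_{σᵢ}(◇t) > 1/2)`:
a literal that is false under it contributes less than `-1/2`, so a clause with three false
literals would have sum below `-3/2`.
-/

instance : Fintype St19 := ⟨{St19.s, St19.t}, fun x => by cases x <;> simp⟩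

lemma eq_zero_of_tsum_eq_one_of_eq_one {ι : Type*} {f : ι → ℝ} (hf : ∀ i, 0 ≤ f i)
    (hsum : ∑' i, f i = 1) {i j : ι} (hi : f i = 1) (hji : j ≠ i) : f j = 0 := by
  have hsummable : Summable f := by
    by_contra h
    rw [tsum_eq_zero_of_not_summable h] at hsum
    exact zero_ne_one hsum
  have hpair := hsummable.sum_le_tsum {i, j} (fun k _ => hf k)
  rw [Finset.sum_pair hji.symm, hsum, hi] at hpair
  linarith [hf j]

namespace MDP

variable {S A : Type} (M : MDP S A)

lemma enabled_of_P_eq_one [Finite S] {s s' : S} {a : A} (h : M.P s a s' = 1) :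
    M.Enabled s a := by
  by_contra hne
  have hle : M.P s a s' ≤ ∑' y, M.P s a y :=
    Summable.of_finite.le_tsum s' fun y _ => M.nonneg s a y
  rw [M.zero_of_not_enabled s a hne, h] at hle
  exact absurd hle zero_lt_one.not_ge

lemma P_eq_zero_of_P_eq_one [Finite S] {s s' s'' : S} {a : A} (h : M.P s a s' = 1)
    (hs'' : s'' ≠ s') : M.P s a s'' = 0 :=
  eq_zero_of_tsum_eq_one_of_eq_one (M.nonneg s a) (M.enabled_of_P_eq_one h) h hs''

end MDP

namespace Scheduler

variable {S A : Type} {M : MDP S A}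

lemma act_eq_zero_of_act_eq_one (σ : Scheduler M) {p : FPath S A} {a b : A}
    (h : σ.act p a = 1) (hb : b ≠ a) : σ.act p b = 0 :=
  eq_zero_of_tsum_eq_one_of_eq_one (σ.nonneg p) (σ.sum_one p) h hb

noncomputable def ofChoice (f : S → A) (hf : ∀ s, M.Enabled s (f s)) : Scheduler M where
  act p a := if a = f (fpLast p) then 1 else 0
  nonneg p a := by split <;> norm_num
  sum_one p := tsum_ite_eq (f (fpLast p)) 1
  not_enabled p a ha := if_neg fun hfa : a = f (fpLast p) => ha (hfa ▸ hf (fpLast p))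

noncomputable def playAt {s : S} {a : A} (ha : M.Enabled s a) : Scheduler M :=
  ofChoice (Function.update (fun x => (M.exists_enabled x).choose) s a) fun x => by
    by_cases hx : x = s
    · subst hx; simpa using ha
    · simpa [hx, MDP.Enabled] using (M.exists_enabled x).choose_spec

lemma playAt_act {s : S} {a : A} (ha : M.Enabled s a) {p : FPath S A} (hp : fpLast p = s) :
    (playAt ha).act p a = 1 := by
  simp [playAt, ofChoice, hp]

end Scheduler

section Reachability

variable {S A : Type} {M : MDP S A} {σ : Scheduler M} {T : Set S}

lemma fpLast_fpExt (p : FPath S A) (a : A) (s' : S) : fpLast (fpExt p a s') = s' := by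
  simp [fpLast, fpExt]

lemma stepExp_eq_of_act_eq_one_of_P_eq_one [Finite S] {p : FPath S A} {a : A} {s' : S}
    (hσ : σ.act p a = 1) (hP : M.P (fpLast p) a s' = 1) (g : FPath S A → ℝ) :
    stepExp M σ p g = g (fpExt p a s') := by
  unfold stepExp
  rw [tsum_eq_single a, tsum_eq_single s']
  · simp [hσ, hP]
  · intro y hy
    simp [M.P_eq_zero_of_P_eq_one hP hy]
  · intro b hb
    simp [σ.act_eq_zero_of_act_eq_one hσ hb]

lemma reachN_eq_one_of_mem {p : FPath S A} (hp : fpLast p ∈ T) (n : ℕ) :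
    reachN M σ T n p = 1 := by
  cases n <;> simp [reachN, hp]

lemma reachProb_eq_one_of_step [Finite S] {s t : S} {a : A}
    (hσ : σ.act (s, []) a = 1) (hP : M.P s a t = 1) (ht : t ∈ T) :
    reachProb M σ s T = 1 := by
  have hsucc (n : ℕ) : reachN M σ T (n + 1) (s, []) = 1 := by
    rw [reachN, stepExp_eq_of_act_eq_one_of_P_eq_one hσ hP,
      reachN_eq_one_of_mem ((fpLast_fpExt _ _ _).symm ▸ ht)]
    exact ite_self 1
  have hle (n : ℕ) : reachN M σ T n (s, []) ≤ 1 := by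
    cases n with
    | zero => unfold reachN; split <;> norm_num
    | succ n => exact (hsucc n).le
  have hbdd : BddAbove (Set.range fun n => reachN M σ T n (s, [])) :=
    ⟨1, by rintro _ ⟨n, rfl⟩; exact hle n⟩
  unfold reachProb
  exact le_antisymm (ciSup_le hle) ((hsucc 0).symm.le.trans (le_ciSup hbdd 1))

lemma reachN_eq_zero_of_trap [Finite S] {s : S} {a : A}
    (hσ : ∀ p : FPath S A, fpLast p = s → σ.act p a = 1) (hP : M.P s a s = 1) (hs : s ∉ T)
    (n : ℕ) {p : FPath S A} (hp : fpLast p = s) : reachN M σ T n p = 0 := by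
  induction n generalizing p with
  | zero => simp [reachN, hp, hs]
  | succ n ih =>
    rw [reachN, if_neg (hp ▸ hs),
      stepExp_eq_of_act_eq_one_of_P_eq_one (s' := s) (hσ p hp) (by rwa [hp]),
      ih (fpLast_fpExt _ _ _)]

lemma reachProb_eq_zero_of_trap [Finite S] {s : S} {a : A}
    (hσ : ∀ p : FPath S A, fpLast p = s → σ.act p a = 1) (hP : M.P s a s = 1) (hs : s ∉ T) :
    reachProb M σ s T = 0 := by
  have hzero (n : ℕ) : reachN M σ T n (s, []) = 0 := reachN_eq_zero_of_trap hσ hP hs n rfl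
  simp only [reachProb, hzero, ciSup_const]

end Reachability

section ClauseArithmetic

variable {ι : Type*} (c : Fin 3 → ι × Bool)

lemma signed_mul_indicator_sub_half (b v : Bool) :
    (if b then (2 : ℝ) else -2) * ((if v then 1 else 0) - 1/2) = if v = b then 1 else -1 := by
  cases b <;> cases v <;> norm_num

lemma signed_mul_sub_half_lt_of_decide_ne {x : ℝ} {b : Bool} (hx : 1/4 < |x - 1/2|)
    (hb : decide (1/2 < x) ≠ b) : (if b then (2 : ℝ) else -2) * (x - 1/2) < -1/2 := by
  cases b
  · have hlt : 1/2 < x := by simpa using hb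
    rw [abs_of_pos (by linarith)] at hx
    simp only [Bool.false_eq_true, if_false]
    linarith
  · have hle : x ≤ 1/2 := by simpa using hb
    rw [abs_of_nonpos (by linarith)] at hx
    simp only [if_true]
    linarith

lemma clause_sum_ge_of_satisfied (v : ι → Bool) (hc : ∃ h, v (c h).1 = (c h).2) :
    -1 ≤ ∑ h, (if (c h).2 then (2 : ℝ) else -2) * ((if v (c h).1 then 1 else 0) - 1/2) := by
  simp only [signed_mul_indicator_sub_half, Fin.sum_univ_three]
  obtain ⟨h, hh⟩ := hc
  fin_cases h <;> simp only [Fin.zero_eta, Fin.mk_one, Fin.reduceFinMk] at hh <;>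
    simp only [hh, if_true] <;> split_ifs <;> norm_num

lemma exists_decide_eq_of_clause_sum_ge (r : ι → ℝ) (hgap : ∀ i, 1/4 < |r i - 1/2|)
    (hsum : -1 ≤ ∑ h, (if (c h).2 then (2 : ℝ) else -2) * (r (c h).1 - 1/2)) :
    ∃ h, decide (1/2 < r (c h).1) = (c h).2 := by
  by_contra! hne
  have hlt (h : Fin 3) := signed_mul_sub_half_lt_of_decide_ne (hgap (c h).1) (hne h)
  rw [Fin.sum_univ_three] at hsum
  linarith [hlt 0, hlt 1, hlt 2]

end ClauseArithmetic

theorem threeSat_iff_conjRelReach_schedulers_general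
    (N Mn : ℕ) (lit : Fin Mn → Fin 3 → Fin N × Bool)
    (Mφ : MDP St19 Ac19)
    (h1 : Mφ.P St19.s Ac19.α St19.s = 1)
    (h2 : Mφ.P St19.s Ac19.β St19.t = 1) :
    (∃ v : Fin N → Bool, ∀ j : Fin Mn, ∃ h : Fin 3, v (lit j h).1 = (lit j h).2) ↔
    (∃ σ : Fin N → Scheduler Mφ,
        (∀ i : Fin N, |reachProb Mφ (σ i) St19.s {St19.t} - 1/2| > 1/4) ∧
        (∀ j : Fin Mn,
          (∑ h : Fin 3,
            (if (lit j h).2 then (2 : ℝ) else -2) *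
              (reachProb Mφ (σ (lit j h).1) St19.s {St19.t} - 1/2)) ≥ -1)) := by
  let stay := Scheduler.playAt (Mφ.enabled_of_P_eq_one h1)
  let leave := Scheduler.playAt (Mφ.enabled_of_P_eq_one h2)
  have hstay : reachProb Mφ stay St19.s {St19.t} = 0 :=
    reachProb_eq_zero_of_trap (fun _ => Scheduler.playAt_act _) h1 (by simp)
  have hleave : reachProb Mφ leave St19.s {St19.t} = 1 :=
    reachProb_eq_one_of_step (Scheduler.playAt_act _ rfl) h2 rfl
  constructor
  · rintro ⟨v, hv⟩
    have hreach (i : Fin N) : reachProb Mφ (if v i then leave else stay) St19.s {St19.t} =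
        if v i then 1 else 0 := by
      split <;> assumption
    refine ⟨fun i => if v i then leave else stay, fun i => ?_, fun j => ?_⟩
    · rw [hreach]
      split <;> norm_num [abs_of_pos, abs_of_neg]
    · simpa only [hreach] using clause_sum_ge_of_satisfied (lit j) v (hv j)
  · rintro ⟨σ, hgap, hclause⟩
    exact ⟨fun i => decide (1/2 < reachProb Mφ (σ i) St19.s {St19.t}),
      fun j => exists_decide_eq_of_clause_sum_ge (lit j) _ hgap (hclause j)⟩

/-- Literals are encoded as pairs `(i, b) : Fin N × Bool`, where `(i, true)` is the positive
literal `xᵢ` and `(i, false)` the negative literal `x̄ᵢ`.  The clauses of the 3CNF formula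
`φ` are given by `lit : Fin M → Fin 3 → Fin N × Bool`; `(lit j h).1` is the index `κ(j,h)`
and the sign `a_{j,h}` is `2` for a positive and `-2` for a negative literal. -/
theorem threeSat_iff_conjRelReach_schedulers
    (N Mn : ℕ) (lit : Fin Mn → Fin 3 → Fin N × Bool)
    (Mφ : MDP St19 Ac19)
    (h1 : Mφ.P St19.s Ac19.α St19.s = 1)
    (h2 : Mφ.P St19.s Ac19.β St19.t = 1)
    (h3 : Mφ.P St19.t Ac19.β St19.t = 1)
    (h0 : ∀ (x : St19) (a : Ac19) (y : St19), Mφ.P x a y ≠ 0 →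
      (x = St19.s ∧ a = Ac19.α ∧ y = St19.s) ∨
      (x = St19.s ∧ a = Ac19.β ∧ y = St19.t) ∨
      (x = St19.t ∧ a = Ac19.β ∧ y = St19.t)) :
    (∃ v : Fin N → Bool, ∀ j : Fin Mn, ∃ h : Fin 3, v (lit j h).1 = (lit j h).2) ↔
    (∃ σ : Fin N → Scheduler Mφ,
        (∀ i : Fin N, |reachProb Mφ (σ i) St19.s {St19.t} - 1/2| > 1/4) ∧
        (∀ j : Fin Mn,
          (∑ h : Fin 3,
            (if (lit j h).2 then (2 : ℝ) else -2) *
              (reachProb Mφ (σ (lit j h).1) St19.s {St19.t} - 1/2)) ≥ -1)) :=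
  threeSat_iff_conjRelReach_schedulers_general N Mn lit Mφ h1 h2
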